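/- arXiv:1203.2371 — 3 statements merged into one kernel-verified Lean document; each statement's English description precedes it below -/
import Mathlib

section
/- In su(3) (trace-free skew-Hermitian 3×3 complex matrices), let E₁₂, E₂₃, E₁₃ be the real elementary skew-symmetric matrices and let iF₁₂, iF₂₃, iF₁₃ be i times the symmetric matrices with 1 in entries (i,j) and (j,i). Set X = E₂₃ + (E₁₂ + E₁₃) and Y = iF₂₃ + i(F₁₂ − F₁₃). Then [X, Y] = 0, while [E₂₃, iF₂₃] = 2i(F₂₂ − F₃₃) ≠ 0, where Fₖₖ is the matrix with 1 in entry (k,k) and zeros elsewhere. -/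
open Complex in
/-- Elementary skew-symmetric 3×3 complex matrix. -/
def Esu3 (i j : Fin 3) : Matrix (Fin 3) (Fin 3) ℂ :=
  Matrix.single i j 1 - Matrix.single j i 1

/-- The symmetric matrix with 1 in entries (i,j) and (j,i). -/
def Fsu3 (i j : Fin 3) : Matrix (Fin 3) (Fin 3) ℂ :=
  Matrix.single i j 1 + Matrix.single j i 1

/-! With `Dₖ` the diagonal matrix unit, `[E_ij, F_ij] = 2(D_i − D_j)` and `[E_ij, F_jk] = F_ik` for
distinct `i, j, k`. Expanding `[X, Y]` bilinearly, the three diagonal contributions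
`2(D₂ − D₃) + 2(D₁ − D₂) − 2(D₁ − D₃)` telescope to zero and the six off-diagonal ones cancel in
pairs, whereas `[E₂₃, iF₂₃]` is just the first diagonal contribution times `i`. -/

open Matrix

section

-- Mathlib only gives matrices the commutator bracket; this local instance supplies the Lie-ring
-- lemmas for it. Outside the section `⁅·, ·⁆` elaborates through the plain bracket again.
attribute [local instance] LieRing.ofAssociativeRing

variable {i j k : Fin 3}

theorem esu3_swap (i j : Fin 3) : Esu3 j i = -Esu3 i j :=
  (neg_sub _ _).symm

theorem fsu3_swap (i j : Fin 3) : Fsu3 j i = Fsu3 i j :=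
  add_comm _ _

theorem lie_esu3_fsu3_self (h : i ≠ j) :
    ⁅Esu3 i j, Fsu3 i j⁆ = (2 : ℂ) • (single i i 1 - single j j 1) := by
  simp only [Esu3, Fsu3, Ring.lie_def, sub_mul, mul_add, add_mul, mul_sub, single_mul_single_same,
    single_mul_single_of_ne _ _ _ _ h, single_mul_single_of_ne _ _ _ _ h.symm, one_mul]
  module

theorem lie_esu3_fsu3_of_ne (hij : i ≠ j) (hjk : j ≠ k) (hik : i ≠ k) :
    ⁅Esu3 i j, Fsu3 j k⁆ = Fsu3 i k := by
  simp only [Esu3, Fsu3, Ring.lie_def, sub_mul, mul_add, add_mul, mul_sub, single_mul_single_same,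
    single_mul_single_of_ne _ _ _ _ hij, single_mul_single_of_ne _ _ _ _ hij.symm,
    single_mul_single_of_ne _ _ _ _ hjk, single_mul_single_of_ne _ _ _ _ hjk.symm,
    single_mul_single_of_ne _ _ _ _ hik, single_mul_single_of_ne _ _ _ _ hik.symm, one_mul]
  abel

theorem lie_esu3_smul_fsu3_self (h : i ≠ j) (c : ℂ) :
    ⁅Esu3 i j, c • Fsu3 i j⁆ = (2 * c) • (single i i 1 - single j j 1) := by
  rw [lie_smul, lie_esu3_fsu3_self h, smul_smul, mul_comm]

theorem lie_esu3_sum_smul_fsu3_sum (c : ℂ) :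
    ⁅Esu3 1 2 + (Esu3 0 1 + Esu3 0 2), c • Fsu3 1 2 + c • (Fsu3 0 1 - Fsu3 0 2)⁆ = 0 := by
  have h₁ : ⁅Esu3 1 2, Fsu3 0 1⁆ = -Fsu3 0 2 := by
    rw [esu3_swap 2 1, fsu3_swap, neg_lie, lie_esu3_fsu3_of_ne (by decide) (by decide) (by decide),
      fsu3_swap]
  have h₂ : ⁅Esu3 1 2, Fsu3 0 2⁆ = Fsu3 0 1 := by
    rw [fsu3_swap 2 0, lie_esu3_fsu3_of_ne (by decide) (by decide) (by decide), fsu3_swap]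
  have h₃ : ⁅Esu3 0 1, Fsu3 1 2⁆ = Fsu3 0 2 :=
    lie_esu3_fsu3_of_ne (by decide) (by decide) (by decide)
  have h₄ : ⁅Esu3 0 1, Fsu3 0 2⁆ = -Fsu3 1 2 := by
    rw [esu3_swap 1 0, neg_lie, lie_esu3_fsu3_of_ne (by decide) (by decide) (by decide)]
  have h₅ : ⁅Esu3 0 2, Fsu3 1 2⁆ = Fsu3 0 1 := by
    rw [fsu3_swap 2 1, lie_esu3_fsu3_of_ne (by decide) (by decide) (by decide)]
  have h₆ : ⁅Esu3 0 2, Fsu3 0 1⁆ = -Fsu3 1 2 := by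
    rw [esu3_swap 2 0, neg_lie, lie_esu3_fsu3_of_ne (by decide) (by decide) (by decide), fsu3_swap]
  rw [← smul_add, lie_smul]
  simp only [add_lie, lie_add, lie_sub, h₁, h₂, h₃, h₄, h₅, h₆,
    lie_esu3_fsu3_self (show (1 : Fin 3) ≠ 2 by decide),
    lie_esu3_fsu3_self (show (0 : Fin 3) ≠ 1 by decide),
    lie_esu3_fsu3_self (show (0 : Fin 3) ≠ 2 by decide)]
  module

end

/-- In `su(3)`: with `X = E₂₃ + (E₁₂ + E₁₃)` and `Y = iF₂₃ + i(F₁₂ − F₁₃)`,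
one has `[X,Y] = 0`, while `[E₂₃, iF₂₃] = 2i(F₂₂ − F₃₃) ≠ 0`. (0-based indices.) -/
theorem stmt3 :
    ⁅Esu3 1 2 + (Esu3 0 1 + Esu3 0 2),
      Complex.I • Fsu3 1 2 + Complex.I • (Fsu3 0 1 - Fsu3 0 2)⁆ = 0 ∧
    ⁅Esu3 1 2, Complex.I • Fsu3 1 2⁆
      = (2 * Complex.I) • (Matrix.single (1 : Fin 3) 1 (1:ℂ)
          - Matrix.single (2 : Fin 3) 2 (1:ℂ)) ∧
    (2 * Complex.I) • (Matrix.single (1 : Fin 3) 1 (1:ℂ)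
          - Matrix.single (2 : Fin 3) 2 (1:ℂ)) ≠ 0 := by
  refine ⟨lie_esu3_sum_smul_fsu3_sum _, lie_esu3_smul_fsu3_self (by decide) _, fun h => ?_⟩
  simpa using congrFun (congrFun h 1) 1
end

section
/- In sp(2), realized as 2×2 quaternionic matrices X with X* = −X (or equivalently using the Hermitian convention of the paper), the matrices X = [[j, j+1],[j−1, i−k]] and Y = [[−i−k, i],[i, i/2 + j − k/2]] satisfy [X, Y] = 0, while the off-diagonal parts X^m = [[0, j+1],[j−1, 0]] and Y^m = [[0, i],[i, 0]] satisfy [X^m, Y^m] ≠ 0. -/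
open Quaternion

/-- The quaternion unit i. -/
def qi : ℍ[ℝ] := ⟨0, 1, 0, 0⟩
/-- The quaternion unit j. -/
def qj : ℍ[ℝ] := ⟨0, 0, 1, 0⟩
/-- The quaternion unit k. -/
def qk : ℍ[ℝ] := ⟨0, 0, 0, 1⟩

@[simp] lemma re_qi : qi.re = 0 := rfl
@[simp] lemma imI_qi : qi.imI = 1 := rfl
@[simp] lemma imJ_qi : qi.imJ = 0 := rfl
@[simp] lemma imK_qi : qi.imK = 0 := rfl
@[simp] lemma re_qj : qj.re = 0 := rfl
@[simp] lemma imI_qj : qj.imI = 0 := rfl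
@[simp] lemma imJ_qj : qj.imJ = 1 := rfl
@[simp] lemma imK_qj : qj.imK = 0 := rfl
@[simp] lemma re_qk : qk.re = 0 := rfl
@[simp] lemma imI_qk : qk.imI = 0 := rfl
@[simp] lemma imJ_qk : qk.imJ = 0 := rfl
@[simp] lemma imK_qk : qk.imK = 1 := rfl

theorem Quaternion.div_ofNat_eq_smul {R : Type*} [Field R] [LinearOrder R] [IsStrictOrderedRing R]
    (x : ℍ[R]) (n : ℕ) [n.AtLeastTwo] :
    x / (ofNat(n) : ℍ[R]) = (ofNat(n) : R)⁻¹ • x := by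
  rw [div_eq_mul_inv, ← mul_coe_eq_smul, coe_inv]
  rfl

theorem Matrix.lie_fin_two {R : Type*} [Ring R] (a b c d e f g h : R) :
    ⁅!![a, b; c, d], !![e, f; g, h]⁆ =
      !![a * e + b * g - (e * a + f * c), a * f + b * h - (e * b + f * d);
         c * e + d * g - (g * a + h * c), c * f + d * h - (g * b + h * d)] := by
  rw [Ring.lie_def, Matrix.mul_fin_two, Matrix.mul_fin_two]
  ext i j
  fin_cases i <;> fin_cases j <;> rfl

/-- In `sp(2)` (2×2 quaternionic matrices) the matrices
`X = [[j, j+1],[j−1, i−k]]` and `Y = [[−i−k, i],[i, i/2 + j − k/2]]` commute, while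
their off-diagonal parts `X^m = [[0, j+1],[j−1, 0]]` and `Y^m = [[0,i],[i,0]]`
have nonvanishing commutator. -/
theorem stmt6 :
    ⁅(!![qj, qj + 1; qj - 1, qi - qk] : Matrix (Fin 2) (Fin 2) ℍ[ℝ]),
      (!![-qi - qk, qi; qi, qi / 2 + qj - qk / 2] : Matrix (Fin 2) (Fin 2) ℍ[ℝ])⁆ = 0 ∧
    ⁅(!![0, qj + 1; qj - 1, 0] : Matrix (Fin 2) (Fin 2) ℍ[ℝ]),
      (!![0, qi; qi, 0] : Matrix (Fin 2) (Fin 2) ℍ[ℝ])⁆ ≠ 0 := by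
  rw [Matrix.lie_fin_two, Matrix.lie_fin_two]
  refine ⟨?_, fun h => ?_⟩
  · rw [Quaternion.div_ofNat_eq_smul, Quaternion.div_ofNat_eq_smul]
    ext i j : 1
    fin_cases i <;> fin_cases j <;> ext <;>
      norm_num [Quaternion.re_mul, Quaternion.imI_mul, Quaternion.imJ_mul, Quaternion.imK_mul]
  · -- the top-left entry is `(j + 1) i - i (j - 1) = 2 (i - k)`, whose `i`-component is `2`
    have h00 : (qj + 1) * qi - qi * (qj - 1) = 0 := by simpa using congrFun₂ h 0 0
    have h00_imI := congr_arg QuaternionAlgebra.imI h00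
    norm_num [Quaternion.imI_mul] at h00_imI
end

section
/- Let g = g₀ ⊕ g₁ ⊕ ⋯ ⊕ gₙ be an orthogonal decomposition of a compact Lie algebra into ideals (g₀ abelian, gᵢ simple), and let h ⊂ k ⊂ g be subalgebras with h = ⊕ᵢ(h ∩ gᵢ) ⊕ (central part) and k = ⊕ᵢ(k ∩ gᵢ) ⊕ (central part) (as for full-rank/regular subalgebras). If for each i = 1,…,n there exists Cᵢ > 0 with |[X^{mᵢ},Y^{mᵢ}]^{mᵢ}| ≤ Cᵢ|[X,Y]| for all X, Y in the orthogonal complement pᵢ of h ∩ gᵢ in gᵢ, then with C = max(C₁,…,Cₙ), for all X, Y in the orthogonal complement p of h in g: |[X^m, Y^m]^m| ≤ C|[X,Y]|, where m is the orthogonal complement of h in k. -/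
/-!
Ad-invariance makes every `ad x` skew-adjoint, hence linear, and together with the Lie identities
it makes the bracket bilinear and skew, so an ideal brackets trivially with its orthogonal
complement. Hence `⁅X, Y⁆ = ∑ i, ⁅Xᵢ, Yᵢ⁆`, where `Xᵢ` is the component of `X` in `gᵢ` and the
abelian part contributes nothing. Since `h` and `k` split along the ideals, the projection onto
`gᵢ` preserves `h`, `hᗮ` and `k`; it therefore commutes with the projection onto `m = hᗮ ⊓ k`,
which on `gᵢ` is the projection onto `mᵢ = m ⊓ gᵢ`. So `[X^m, Y^m]^m` is the sum over `i` of the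
mutually orthogonal vectors `[Xᵢ^{mᵢ}, Yᵢ^{mᵢ}]^{mᵢ}`, and Pythagoras compares it termwise with
`⁅X, Y⁆ = ∑ i, ⁅Xᵢ, Yᵢ⁆`.
-/

open RealInnerProductSpace

attribute [local instance 0] LieRing.toAddCommGroup

open Set
open scoped InnerProductSpace

set_option linter.overlappingInstances false

namespace Submodule

variable {𝕜 E : Type*} [RCLike 𝕜] [NormedAddCommGroup E] [InnerProductSpace 𝕜 E]
  {K U : Submodule 𝕜 E} [U.HasOrthogonalProjection]

theorem mapsTo_starProjection_orthogonal (h : MapsTo U.starProjection K K) :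
    MapsTo U.starProjection Kᗮ Kᗮ := fun x hx w hw => by
  rw [← inner_starProjection_left_eq_right, inner_right_of_mem_orthogonal (h hw) hx]

theorem orthogonal_inf_inf_eq_of_mapsTo (h : MapsTo U.starProjection K K) :
    (K ⊓ U)ᗮ ⊓ U = Kᗮ ⊓ U := by
  refine le_antisymm (fun x ⟨hx, hxU⟩ => ⟨fun w hw => ?_, hxU⟩)
    (inf_le_inf_right U (orthogonal_le inf_le_left))
  rw [← starProjection_eq_self_iff.mpr hxU, ← inner_starProjection_left_eq_right]
  exact inner_right_of_mem_orthogonal (mem_inf.mpr ⟨h hw, starProjection_apply_mem U w⟩) hx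

variable [K.HasOrthogonalProjection] [(K ⊓ U).HasOrthogonalProjection]

theorem starProjection_starProjection_eq_inf_of_mapsTo (h : MapsTo U.starProjection K K)
    (x : E) : U.starProjection (K.starProjection x) = (K ⊓ U).starProjection x := by
  refine (eq_starProjection_of_mem_of_inner_eq_zero (mem_inf.mpr ⟨h (starProjection_apply_mem K x),
    starProjection_apply_mem U _⟩) fun w hw => ?_).symm
  rw [inner_sub_left, inner_starProjection_left_eq_right U,
    starProjection_eq_self_iff.mpr (mem_inf.mp hw).2, ← inner_sub_left,
    starProjection_inner_eq_zero x w (mem_inf.mp hw).1]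

theorem starProjection_starProjection_of_mapsTo (h : MapsTo U.starProjection K K) (x : E) :
    U.starProjection (K.starProjection x) = (K ⊓ U).starProjection (U.starProjection x) := by
  rw [starProjection_starProjection_eq_inf_of_mapsTo h, ← ContinuousLinearMap.comp_apply,
    starProjection_comp_starProjection_of_le inf_le_right]

theorem starProjection_eq_starProjection_inf_of_mem (h : MapsTo U.starProjection K K) {y : E}
    (hy : y ∈ U) : K.starProjection y = (K ⊓ U).starProjection y :=
  ext_inner_right 𝕜 fun w => calc
    ⟪K.starProjection y, w⟫_𝕜 = ⟪y, U.starProjection (K.starProjection w)⟫_𝕜 := by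
      rw [inner_starProjection_left_eq_right, ← inner_starProjection_left_eq_right U,
        starProjection_eq_self_iff.mpr hy]
    _ = ⟪(K ⊓ U).starProjection y, w⟫_𝕜 := by
      rw [starProjection_starProjection_eq_inf_of_mapsTo h, inner_starProjection_left_eq_right]

end Submodule

namespace OrthogonalFamily

variable {𝕜 E ι : Type*} [RCLike 𝕜] [NormedAddCommGroup E] [InnerProductSpace 𝕜 E]
  {G : ι → Submodule 𝕜 E}

theorem sub_sum_starProjection_mem [Fintype ι] [∀ i, CompleteSpace (G i)]
    (hG : OrthogonalFamily 𝕜 (fun i => G i) fun i => (G i).subtypeₗᵢ) {z : Submodule 𝕜 E}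
    (hz : ∀ i, z ⟂ G i) (hspan : z ⊔ ⨆ i, G i = ⊤) (x : E) :
    x - ∑ i, (G i).starProjection x ∈ z := by
  obtain ⟨a, ha, b, hb, rfl⟩ := Submodule.mem_sup.mp (hspan ▸ Submodule.mem_top : x ∈ z ⊔ ⨆ i, G i)
  have ha0 : ∑ i, (G i).starProjection a = 0 := Finset.sum_eq_zero fun i _ =>
    ((G i).starProjection_apply_eq_zero_iff).mpr ((hz i).le ha)
  simp_rw [map_add, Finset.sum_add_distrib, ha0, zero_add, hG.sum_projection_of_mem_iSup b hb,
    add_sub_cancel_right]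
  exact ha

theorem mapsTo_starProjection
    (hG : OrthogonalFamily 𝕜 (fun i => G i) fun i => (G i).subtypeₗᵢ) {z p : Submodule 𝕜 E}
    (hz : ∀ i, z ⟂ G i) (hp : p ≤ (p ⊓ z) ⊔ ⨆ j, p ⊓ G j) (i : ι)
    [(G i).HasOrthogonalProjection] : MapsTo (G i).starProjection p p := by
  suffices p ≤ p.comap ((G i).starProjection : E →ₗ[𝕜] E) from fun x hx => this hx
  refine hp.trans (sup_le (fun y hy => ?_) (iSup_le fun j y hy => ?_))
  · rw [Submodule.mem_comap, ContinuousLinearMap.coe_coe,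
      ((G i).starProjection_apply_eq_zero_iff).mpr ((hz i).le (Submodule.mem_inf.mp hy).2)]
    exact p.zero_mem
  · rw [Submodule.mem_comap, ContinuousLinearMap.coe_coe]
    obtain ⟨hyp, hyG⟩ := Submodule.mem_inf.mp hy
    rcases eq_or_ne j i with rfl | hji
    · rwa [Submodule.starProjection_eq_self_iff.mpr hyG]
    · rw [((G i).starProjection_apply_eq_zero_iff).mpr ((hG.isOrtho hji).le hyG)]
      exact p.zero_mem

theorem norm_sum_le_mul_norm_sum [Fintype ι]
    (hG : OrthogonalFamily 𝕜 (fun i => G i) fun i => (G i).subtypeₗᵢ) {a b : ι → E}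
    (ha : ∀ i, a i ∈ G i) (hb : ∀ i, b i ∈ G i) {c : ℝ} (hc : 0 ≤ c)
    (hab : ∀ i, ‖a i‖ ≤ c * ‖b i‖) : ‖∑ i, a i‖ ≤ c * ‖∑ i, b i‖ := by
  have hsq : ∀ v : ι → E, (∀ i, v i ∈ G i) → ‖∑ i, v i‖ ^ 2 = ∑ i, ‖v i‖ ^ 2 :=
    fun v hv => hG.norm_sum (fun i => ⟨v i, hv i⟩) Finset.univ
  refine (pow_le_pow_iff_left₀ (norm_nonneg _) (by positivity) two_ne_zero).mp ?_
  rw [mul_pow, hsq a ha, hsq b hb, Finset.mul_sum]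
  exact Finset.sum_le_sum fun i _ => by
    rw [← mul_pow]
    exact pow_le_pow_left₀ (norm_nonneg _) (hab i) 2

end OrthogonalFamily

theorem lie_lie_self_left {L : Type*} [LieRing L] (x y : L) : ⁅⁅x, y⁆, x⁆ = ⁅x, ⁅y, x⁆⁆ := by
  rw [leibniz_lie x y x, lie_self, lie_zero, add_zero]

theorem lie_lie_self_right {L : Type*} [LieRing L] (x y : L) : ⁅⁅x, y⁆, y⁆ = ⁅y, ⁅y, x⁆⁆ := by
  rw [← lie_skew x y, neg_lie, lie_lie_self_left, ← lie_neg, lie_skew]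

/-- The additive structure of `g` is the normed one (the Lie ring's own is demoted above); of the
Lie ring only bracket identities such as `lie_lie_self_left` survive, so linearity and skew-symmetry
of the bracket have to be recovered from invariance. -/
def IsAdInvariant (g : Type*) [LieRing g] [NormedAddCommGroup g] [InnerProductSpace ℝ g] : Prop :=
  ∀ x y z : g, ⟪⁅x, y⁆, z⟫ = -⟪y, ⁅x, z⁆⟫

namespace IsAdInvariant

variable {g : Type*} [LieRing g] [NormedAddCommGroup g] [InnerProductSpace ℝ g]

theorem lie_add (hinv : IsAdInvariant g) (x a b : g) : ⁅x, a + b⁆ = ⁅x, a⁆ + ⁅x, b⁆ :=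
  ext_inner_right ℝ fun w => by
    rw [hinv, inner_add_left, inner_add_left, hinv x a w, hinv x b w, neg_add]

theorem lie_smul (hinv : IsAdInvariant g) (c : ℝ) (x y : g) : ⁅x, c • y⁆ = c • ⁅x, y⁆ :=
  ext_inner_right ℝ fun w => by
    rw [hinv, real_inner_smul_left, real_inner_smul_left, hinv, mul_neg]

theorem inner_lie_lie_swap (hinv : IsAdInvariant g) (x y : g) :
    ⟪⁅x, y⁆, ⁅y, x⁆⟫ = -‖⁅y, x⁆‖ ^ 2 := by
  rw [hinv, ← lie_lie_self_left, real_inner_comm, hinv, lie_lie_self_right, real_inner_comm,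
    hinv, real_inner_self_eq_norm_sq, neg_neg]

theorem lie_skew (hinv : IsAdInvariant g) (x y : g) : -⁅y, x⁆ = ⁅x, y⁆ := by
  have hsum : ‖⁅x, y⁆ + ⁅y, x⁆‖ ^ 2 = 0 := by
    rw [norm_add_sq_real]
    linarith [hinv.inner_lie_lie_swap x y, hinv.inner_lie_lie_swap y x,
      real_inner_comm ⁅x, y⁆ ⁅y, x⁆]
  rw [neg_eq_iff_add_eq_zero, add_comm, ← norm_eq_zero]
  exact pow_eq_zero_iff two_ne_zero |>.mp hsum

theorem add_lie (hinv : IsAdInvariant g) (a b y : g) : ⁅a + b, y⁆ = ⁅a, y⁆ + ⁅b, y⁆ := by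
  rw [← hinv.lie_skew, hinv.lie_add, neg_add, hinv.lie_skew, hinv.lie_skew]

theorem smul_lie (hinv : IsAdInvariant g) (c : ℝ) (x y : g) : ⁅c • x, y⁆ = c • ⁅x, y⁆ := by
  rw [← hinv.lie_skew, hinv.lie_smul, ← smul_neg, hinv.lie_skew]

def bracket (hinv : IsAdInvariant g) : g →ₗ[ℝ] g →ₗ[ℝ] g :=
  LinearMap.mk₂ ℝ (fun x y => ⁅x, y⁆) hinv.add_lie hinv.smul_lie hinv.lie_add hinv.lie_smul

@[simp]
theorem bracket_apply (hinv : IsAdInvariant g) (x y : g) : hinv.bracket x y = ⁅x, y⁆ := rfl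

theorem lie_eq_zero_of_mem_orthogonal (hinv : IsAdInvariant g) {I : Submodule ℝ g}
    (hI : ∀ x : g, ∀ y ∈ I, ⁅x, y⁆ ∈ I) {x y : g} (hx : x ∈ I) (hy : y ∈ Iᗮ) : ⁅x, y⁆ = 0 := by
  have hmem : ⁅x, ⁅x, y⁆⁆ ∈ I := by
    rw [← hinv.lie_skew]
    exact I.neg_mem (hI _ _ hx)
  rw [← inner_self_eq_zero (𝕜 := ℝ), hinv, Submodule.inner_left_of_mem_orthogonal hmem hy,
    neg_zero]

theorem lie_starProjection_left (hinv : IsAdInvariant g) {I : Submodule ℝ g}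
    [I.HasOrthogonalProjection] (hI : ∀ x : g, ∀ y ∈ I, ⁅x, y⁆ ∈ I) (x : g) {y : g}
    (hy : y ∈ I) : ⁅I.starProjection x, y⁆ = ⁅x, y⁆ := by
  have h : ⁅x - I.starProjection x, y⁆ = 0 := by
    rw [← hinv.lie_skew,
      hinv.lie_eq_zero_of_mem_orthogonal hI hy (I.sub_starProjection_mem_orthogonal x), neg_zero]
  rw [← hinv.bracket_apply, map_sub, LinearMap.sub_apply, sub_eq_zero] at h
  exact h.symm

end IsAdInvariant

structure IsOrthogonalIdealDecomposition {g ι : Type*} [LieRing g] [NormedAddCommGroup g]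
    [InnerProductSpace ℝ g] (z : Submodule ℝ g) (G : ι → Submodule ℝ g) : Prop where
  orthogonalFamily : OrthogonalFamily ℝ (fun i => G i) fun i => (G i).subtypeₗᵢ
  isOrtho : ∀ i, z ⟂ G i
  sup_iSup_eq_top : z ⊔ ⨆ i, G i = ⊤
  lie_eq_zero : ∀ x ∈ z, ∀ y ∈ z, ⁅x, y⁆ = 0
  lie_mem : ∀ i, ∀ x : g, ∀ y ∈ G i, ⁅x, y⁆ ∈ G i

namespace IsOrthogonalIdealDecomposition

variable {g ι : Type*} [LieRing g] [NormedAddCommGroup g] [InnerProductSpace ℝ g] [Fintype ι]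
  {z : Submodule ℝ g} {G : ι → Submodule ℝ g} [∀ i, CompleteSpace (G i)]

theorem lie_eq_sum (hD : IsOrthogonalIdealDecomposition z G) (hinv : IsAdInvariant g)
    (x y : g) : ⁅x, y⁆ = ∑ i, ⁅(G i).starProjection x, (G i).starProjection y⁆ := by
  have hrest : ∀ v, v - ∑ i, (G i).starProjection v ∈ z :=
    hD.orthogonalFamily.sub_sum_starProjection_mem hD.isOrtho hD.sup_iSup_eq_top
  have hcentral : ∀ b ∈ z, ⁅x, b⁆ = 0 := fun b hb => by
    rw [← sub_add_cancel x (∑ i, (G i).starProjection x), hinv.add_lie,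
      hD.lie_eq_zero _ (hrest x) b hb, zero_add, ← hinv.bracket_apply, map_sum,
      LinearMap.sum_apply]
    exact Finset.sum_eq_zero fun i _ => hinv.lie_eq_zero_of_mem_orthogonal (hD.lie_mem i)
      ((G i).starProjection_apply_mem x) ((hD.isOrtho i).le hb)
  calc ⁅x, y⁆ = ⁅x, (y - ∑ i, (G i).starProjection y) + ∑ i, (G i).starProjection y⁆ := by
        rw [sub_add_cancel]
    _ = ∑ i, ⁅x, (G i).starProjection y⁆ := by
        rw [hinv.lie_add, hcentral _ (hrest y), zero_add, ← hinv.bracket_apply, map_sum]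
        rfl
    _ = ∑ i, ⁅(G i).starProjection x, (G i).starProjection y⁆ := Finset.sum_congr rfl fun i _ =>
        (hinv.lie_starProjection_left (hD.lie_mem i) x ((G i).starProjection_apply_mem y)).symm

theorem starProjection_lie_starProjection (hD : IsOrthogonalIdealDecomposition z G)
    (hinv : IsAdInvariant g) {m : Submodule ℝ g} [m.HasOrthogonalProjection]
    [∀ i, (m ⊓ G i).HasOrthogonalProjection] (hm : ∀ i, MapsTo (G i).starProjection m m)
    (x y : g) :
    m.starProjection ⁅m.starProjection x, m.starProjection y⁆ =
      ∑ i, (m ⊓ G i).starProjection ⁅(m ⊓ G i).starProjection ((G i).starProjection x),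
        (m ⊓ G i).starProjection ((G i).starProjection y)⁆ := by
  rw [hD.lie_eq_sum hinv, map_sum]
  refine Finset.sum_congr rfl fun i _ => ?_
  rw [Submodule.starProjection_starProjection_of_mapsTo (hm i) x,
    Submodule.starProjection_starProjection_of_mapsTo (hm i) y]
  exact Submodule.starProjection_eq_starProjection_inf_of_mem (hm i)
    (hD.lie_mem i _ _ (Submodule.mem_inf.mp (Submodule.starProjection_apply_mem _ _)).2)

end IsOrthogonalIdealDecomposition

theorem stmt16_general {g : Type*} [LieRing g] [NormedAddCommGroup g]
    [InnerProductSpace ℝ g] [FiniteDimensional ℝ g]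
    (hinv : ∀ x y z : g, ⟪⁅x, y⁆, z⟫ = -⟪y, ⁅x, z⁆⟫)
    (n : ℕ) (hn : 0 < n)
    (z : Submodule ℝ g) (G : Fin n → Submodule ℝ g)
    -- `z` and the `G i` are ideals of `g`:
    (hGideal : ∀ i, ∀ x : g, ∀ y ∈ G i, ⁅x, y⁆ ∈ G i)
    -- `z` is abelian:
    (hzab : ∀ x ∈ z, ∀ y ∈ z, ⁅x, y⁆ = 0)
    -- the decomposition is orthogonal and exhausts `g`:
    (horthz : ∀ i, ∀ x ∈ z, ∀ y ∈ G i, ⟪x, y⟫ = 0)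
    (horthG : ∀ i j, i ≠ j → ∀ x ∈ G i, ∀ y ∈ G j, ⟪x, y⟫ = 0)
    (hspan : z ⊔ (⨆ i, G i) = ⊤)
    -- the subalgebras `h ⊆ k`:
    (h k : Submodule ℝ g)
    -- `h` and `k` decompose along the ideals:
    (hsplith : h = (h ⊓ z) ⊔ ⨆ i, (h ⊓ G i))
    (hsplitk : k = (k ⊓ z) ⊔ ⨆ i, (k ⊓ G i))
    -- condition on each simple ideal, with constants `Cᵢ > 0`:
    (C : Fin n → ℝ) (hC : ∀ i, 0 < C i)
    (hCi : ∀ i, ∀ X ∈ (h ⊓ G i)ᗮ ⊓ G i, ∀ Y ∈ (h ⊓ G i)ᗮ ⊓ G i,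
      ‖(Submodule.orthogonalProjectionOnto ((h ⊓ G i)ᗮ ⊓ k ⊓ G i)
          ⁅(Submodule.orthogonalProjectionOnto ((h ⊓ G i)ᗮ ⊓ k ⊓ G i) X : g),
            (Submodule.orthogonalProjectionOnto ((h ⊓ G i)ᗮ ⊓ k ⊓ G i) Y : g)⁆ : g)‖
        ≤ C i * ‖⁅X, Y⁆‖) :
    ∀ X ∈ hᗮ, ∀ Y ∈ hᗮ,
      ‖(Submodule.orthogonalProjectionOnto (hᗮ ⊓ k)
          ⁅(Submodule.orthogonalProjectionOnto (hᗮ ⊓ k) X : g),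
            (Submodule.orthogonalProjectionOnto (hᗮ ⊓ k) Y : g)⁆ : g)‖
        ≤ (Finset.univ.sup' (Finset.univ_nonempty_iff.mpr ⟨⟨0, hn⟩⟩) C) * ‖⁅X, Y⁆‖ := by
  intro X hX Y hY
  have hD : IsOrthogonalIdealDecomposition z G :=
    ⟨orthogonalFamily_iff_pairwise.mpr fun i j hij =>
      Submodule.isOrtho_iff_inner_eq.mpr (horthG i j hij),
      fun i => Submodule.isOrtho_iff_inner_eq.mpr (horthz i), hspan, hzab, hGideal⟩
  have hπh : ∀ i, MapsTo (G i).starProjection h h := fun i =>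
    hD.orthogonalFamily.mapsTo_starProjection hD.isOrtho hsplith.le i
  have hπm : ∀ i, MapsTo (G i).starProjection ↑(hᗮ ⊓ k) ↑(hᗮ ⊓ k) := fun i x hx =>
    ⟨Submodule.mapsTo_starProjection_orthogonal (hπh i) hx.1,
      hD.orthogonalFamily.mapsTo_starProjection hD.isOrtho hsplitk.le i hx.2⟩
  have hm : ∀ i, (h ⊓ G i)ᗮ ⊓ k ⊓ G i = hᗮ ⊓ k ⊓ G i := fun i => by
    rw [inf_right_comm, Submodule.orthogonal_inf_inf_eq_of_mapsTo (hπh i), inf_right_comm]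
  have hπX : ∀ {X}, X ∈ hᗮ → ∀ i, (G i).starProjection X ∈ (h ⊓ G i)ᗮ ⊓ G i := fun hX i =>
    ⟨Submodule.orthogonal_le inf_le_left (Submodule.mapsTo_starProjection_orthogonal (hπh i) hX),
      (G i).starProjection_apply_mem _⟩
  simp only [Submodule.coe_orthogonalProjectionOnto_apply, hm] at hCi ⊢
  rw [hD.starProjection_lie_starProjection hinv hπm, hD.lie_eq_sum hinv X Y]
  refine hD.orthogonalFamily.norm_sum_le_mul_norm_sum
    (fun i => (Submodule.mem_inf.mp (Submodule.starProjection_apply_mem _ _)).2)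
    (fun i => hGideal i _ _ ((G i).starProjection_apply_mem _))
    ((hC ⟨0, hn⟩).le.trans (Finset.le_sup' C (Finset.mem_univ _)))
    fun i => (hCi i _ (hπX hX i) _ (hπX hY i)).trans ?_
  exact mul_le_mul_of_nonneg_right (Finset.le_sup' C (Finset.mem_univ i)) (norm_nonneg _)

/-- Let `g = z ⊕ g₁ ⊕ ⋯ ⊕ gₙ` be an orthogonal decomposition of a compact Lie
algebra into ideals (`z` abelian, each `gᵢ` simple), and let `h ⊆ k ⊆ g` be
subalgebras which decompose along the ideals.  If for each `i` there is
`Cᵢ > 0` with `|[X^{mᵢ},Y^{mᵢ}]^{mᵢ}| ≤ Cᵢ |[X,Y]|` for all `X, Y ∈ pᵢ`, then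
with `C = max(C₁,…,Cₙ)` one has `|[X^m,Y^m]^m| ≤ C |[X,Y]|` for all `X, Y ∈ p`. -/
theorem stmt16 {g : Type*} [LieRing g] [NormedAddCommGroup g]
    [InnerProductSpace ℝ g] [FiniteDimensional ℝ g]
    (hbil : ∀ (c : ℝ) (x y : g), ⁅c • x, y⁆ = c • ⁅x, y⁆)
    (hinv : ∀ x y z : g, ⟪⁅x, y⁆, z⟫ = -⟪y, ⁅x, z⁆⟫)
    (n : ℕ) (hn : 0 < n)
    (z : Submodule ℝ g) (G : Fin n → Submodule ℝ g)
    -- `z` and the `G i` are ideals of `g`: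
    (hzideal : ∀ x : g, ∀ y ∈ z, ⁅x, y⁆ ∈ z)
    (hGideal : ∀ i, ∀ x : g, ∀ y ∈ G i, ⁅x, y⁆ ∈ G i)
    -- `z` is abelian:
    (hzab : ∀ x ∈ z, ∀ y ∈ z, ⁅x, y⁆ = 0)
    -- each `G i` is simple (noncommutative and without proper nonzero ideals):
    (hGsimple : ∀ i, (¬ ∀ x ∈ G i, ∀ y ∈ G i, ⁅x, y⁆ = 0) ∧
      ∀ I : Submodule ℝ g, I ≤ G i → (∀ x : g, ∀ y ∈ I, ⁅x, y⁆ ∈ I) →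
        I = ⊥ ∨ I = G i)
    -- the decomposition is orthogonal and exhausts `g`:
    (horthz : ∀ i, ∀ x ∈ z, ∀ y ∈ G i, ⟪x, y⟫ = 0)
    (horthG : ∀ i j, i ≠ j → ∀ x ∈ G i, ∀ y ∈ G j, ⟪x, y⟫ = 0)
    (hspan : z ⊔ (⨆ i, G i) = ⊤)
    -- the subalgebras `h ⊆ k`:
    (h k : Submodule ℝ g)
    (hh : ∀ x ∈ h, ∀ y ∈ h, ⁅x, y⁆ ∈ h)
    (hk : ∀ x ∈ k, ∀ y ∈ k, ⁅x, y⁆ ∈ k)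
    (hhk : h ≤ k)
    -- `h` and `k` decompose along the ideals:
    (hsplith : h = (h ⊓ z) ⊔ ⨆ i, (h ⊓ G i))
    (hsplitk : k = (k ⊓ z) ⊔ ⨆ i, (k ⊓ G i))
    -- condition on each simple ideal, with constants `Cᵢ > 0`:
    (C : Fin n → ℝ) (hC : ∀ i, 0 < C i)
    (hCi : ∀ i, ∀ X ∈ (h ⊓ G i)ᗮ ⊓ G i, ∀ Y ∈ (h ⊓ G i)ᗮ ⊓ G i,
      ‖(Submodule.orthogonalProjectionOnto ((h ⊓ G i)ᗮ ⊓ k ⊓ G i)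
          ⁅(Submodule.orthogonalProjectionOnto ((h ⊓ G i)ᗮ ⊓ k ⊓ G i) X : g),
            (Submodule.orthogonalProjectionOnto ((h ⊓ G i)ᗮ ⊓ k ⊓ G i) Y : g)⁆ : g)‖
        ≤ C i * ‖⁅X, Y⁆‖) :
    ∀ X ∈ hᗮ, ∀ Y ∈ hᗮ,
      ‖(Submodule.orthogonalProjectionOnto (hᗮ ⊓ k)
          ⁅(Submodule.orthogonalProjectionOnto (hᗮ ⊓ k) X : g),
            (Submodule.orthogonalProjectionOnto (hᗮ ⊓ k) Y : g)⁆ : g)‖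
        ≤ (Finset.univ.sup' (Finset.univ_nonempty_iff.mpr ⟨⟨0, hn⟩⟩) C) * ‖⁅X, Y⁆‖ :=
  stmt16_general hinv n hn z G hGideal hzab horthz horthG hspan h k hsplith hsplitk C hC hCi
end
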